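/- arXiv:2402.09261 — 2 statements merged into one kernel-verified Lean document; each statement's English description precedes it below -/
import Mathlib

section
/- Let X be a complex Banach space, let T ∈ L(X) be a quasi-Fredholm operator of degree d and let F ∈ L(X) be a finite-rank operator, so that T + F is quasi-Fredholm of some degree d'. If N(T) ∩ R(T^d) is finite-dimensional, then N(T + F) ∩ R((T + F)^{d'}) is finite-dimensional. -/
noncomputable section

/-- The two-sided ideal `F₀(X)` of finite-rank operators in `L(X)`. -/
def finiteRankIdeal (X : Type*) [NormedAddCommGroup X] [NormedSpace ℂ X] :
    TwoSidedIdeal (X →L[ℂ] X) :=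
  TwoSidedIdeal.mk'
    {F : X →L[ℂ] X | FiniteDimensional ℂ (LinearMap.range ((F : X →L[ℂ] X) : X →ₗ[ℂ] X))}
    (by
      show FiniteDimensional ℂ (LinearMap.range ((0 : X →L[ℂ] X) : X →ₗ[ℂ] X))
      rw [show LinearMap.range ((0 : X →L[ℂ] X) : X →ₗ[ℂ] X) = ⊥ by ext x; simp [eq_comm]]
      infer_instance)
    (by
      intro x y hx hy
      haveI : FiniteDimensional ℂ (LinearMap.range ((x : X →L[ℂ] X) : X →ₗ[ℂ] X)) := hx
      haveI : FiniteDimensional ℂ (LinearMap.range ((y : X →L[ℂ] X) : X →ₗ[ℂ] X)) := hy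
      have hle : LinearMap.range ((x + y : X →L[ℂ] X) : X →ₗ[ℂ] X) ≤ LinearMap.range ((x : X →L[ℂ] X) : X →ₗ[ℂ] X) ⊔ LinearMap.range ((y : X →L[ℂ] X) : X →ₗ[ℂ] X) := by
        rintro z ⟨w, rfl⟩
        exact Submodule.add_mem_sup (LinearMap.mem_range_self (x : X →ₗ[ℂ] X) w) (LinearMap.mem_range_self (y : X →ₗ[ℂ] X) w)
      exact Submodule.finiteDimensional_of_le hle)
    (by
      intro x hx
      haveI : FiniteDimensional ℂ (LinearMap.range ((x : X →L[ℂ] X) : X →ₗ[ℂ] X)) := hx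
      have hle : LinearMap.range ((-x : X →L[ℂ] X) : X →ₗ[ℂ] X) ≤ LinearMap.range ((x : X →L[ℂ] X) : X →ₗ[ℂ] X) := by
        rintro z ⟨w, rfl⟩; exact ⟨-w, by simp⟩
      exact Submodule.finiteDimensional_of_le hle)
    (by
      intro x y hy
      haveI : FiniteDimensional ℂ (LinearMap.range ((y : X →L[ℂ] X) : X →ₗ[ℂ] X)) := hy
      haveI : FiniteDimensional ℂ (Submodule.map (x : X →ₗ[ℂ] X) (LinearMap.range ((y : X →L[ℂ] X) : X →ₗ[ℂ] X))) :=
        Module.Finite.map _ _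
      have hle : LinearMap.range ((x * y : X →L[ℂ] X) : X →ₗ[ℂ] X) ≤ Submodule.map (x : X →ₗ[ℂ] X) (LinearMap.range ((y : X →L[ℂ] X) : X →ₗ[ℂ] X)) := by
        rintro z ⟨w, rfl⟩; exact ⟨y w, LinearMap.mem_range_self (y : X →ₗ[ℂ] X) w, rfl⟩
      exact Submodule.finiteDimensional_of_le hle)
    (by
      intro x y hx
      haveI : FiniteDimensional ℂ (LinearMap.range ((x : X →L[ℂ] X) : X →ₗ[ℂ] X)) := hx
      have hle : LinearMap.range ((x * y : X →L[ℂ] X) : X →ₗ[ℂ] X) ≤ LinearMap.range ((x : X →L[ℂ] X) : X →ₗ[ℂ] X) := by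
        rintro z ⟨w, rfl⟩; exact ⟨y w, rfl⟩
      exact Submodule.finiteDimensional_of_le hle)

/-- Restriction of a bounded operator to an invariant subspace, as a bounded
operator on that subspace. -/
def clmRestrict {X : Type*} [NormedAddCommGroup X] [NormedSpace ℂ X]
    (T : X →L[ℂ] X) (M : Submodule ℂ X) (h : ∀ x ∈ M, T x ∈ M) : M →L[ℂ] M where
  toLinearMap := (T : X →ₗ[ℂ] X).restrict h
  cont := by
    show Continuous fun x : M => (⟨T x, h x x.2⟩ : M)
    exact Continuous.subtype_mk (T.continuous.comp continuous_subtype_val) _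

/-- The set `Δ(T)` of stable iteration indices:
`Δ(T) = {n : ∀ m ≥ n, N(T) ∩ R(T^n) ⊆ N(T) ∩ R(T^m)}`. -/
def disSet {X : Type*} [NormedAddCommGroup X] [NormedSpace ℂ X] (T : X →L[ℂ] X) : Set ℕ :=
  {n | ∀ m, n ≤ m →
    (LinearMap.ker ((T : X →L[ℂ] X) : X →ₗ[ℂ] X) ⊓ LinearMap.range ((T ^ n : X →L[ℂ] X) : X →ₗ[ℂ] X) : Submodule ℂ X) ≤
      LinearMap.ker ((T : X →L[ℂ] X) : X →ₗ[ℂ] X) ⊓ LinearMap.range ((T ^ m : X →L[ℂ] X) : X →ₗ[ℂ] X)}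

/-- `T` is quasi-Fredholm of degree `d` : `dis(T) = d` (i.e. `d` is the least element of
`Δ(T)`), `N(T) ∩ R(T^d)` is a closed complemented subspace of `X`, and `R(T) + N(T^d)` is a
closed complemented subspace of `X`. -/
def IsQuasiFredholmOfDegree {X : Type*} [NormedAddCommGroup X] [NormedSpace ℂ X]
    (T : X →L[ℂ] X) (d : ℕ) : Prop :=
  IsLeast (disSet T) d ∧
    IsClosed ((LinearMap.ker ((T : X →L[ℂ] X) : X →ₗ[ℂ] X) ⊓ LinearMap.range ((T ^ d : X →L[ℂ] X) : X →ₗ[ℂ] X) : Submodule ℂ X) : Set X) ∧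
    (LinearMap.ker ((T : X →L[ℂ] X) : X →ₗ[ℂ] X) ⊓ LinearMap.range ((T ^ d : X →L[ℂ] X) : X →ₗ[ℂ] X)).ClosedComplemented ∧
    IsClosed ((LinearMap.range ((T : X →L[ℂ] X) : X →ₗ[ℂ] X) ⊔ LinearMap.ker ((T ^ d : X →L[ℂ] X) : X →ₗ[ℂ] X) : Submodule ℂ X) : Set X) ∧
    (LinearMap.range ((T : X →L[ℂ] X) : X →ₗ[ℂ] X) ⊔ LinearMap.ker ((T ^ d : X →L[ℂ] X) : X →ₗ[ℂ] X)).ClosedComplemented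

/-- `T` is quasi-Fredholm if it is quasi-Fredholm of some degree `d`. -/
def IsQuasiFredholm {X : Type*} [NormedAddCommGroup X] [NormedSpace ℂ X]
    (T : X →L[ℂ] X) : Prop :=
  ∃ d : ℕ, IsQuasiFredholmOfDegree T d

/-- Left semi-Fredholm: closed range, finite-dimensional kernel, and range complemented
(i.e. the range of a bounded projection). -/
def IsLeftSemiFredholm {Y : Type*} [NormedAddCommGroup Y] [NormedSpace ℂ Y]
    (S : Y →L[ℂ] Y) : Prop :=
  IsClosed ((LinearMap.range ((S : Y →L[ℂ] Y) : Y →ₗ[ℂ] Y) : Submodule ℂ Y) : Set Y) ∧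
    FiniteDimensional ℂ (LinearMap.ker ((S : Y →L[ℂ] Y) : Y →ₗ[ℂ] Y)) ∧ (LinearMap.range ((S : Y →L[ℂ] Y) : Y →ₗ[ℂ] Y)).ClosedComplemented

/-- Right semi-Fredholm: closed range of finite codimension, and kernel complemented
(i.e. the range of a bounded projection). -/
def IsRightSemiFredholm {Y : Type*} [NormedAddCommGroup Y] [NormedSpace ℂ Y]
    (S : Y →L[ℂ] Y) : Prop :=
  IsClosed ((LinearMap.range ((S : Y →L[ℂ] Y) : Y →ₗ[ℂ] Y) : Submodule ℂ Y) : Set Y) ∧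
    FiniteDimensional ℂ (Y ⧸ LinearMap.range ((S : Y →L[ℂ] Y) : Y →ₗ[ℂ] Y)) ∧ (LinearMap.ker ((S : Y →L[ℂ] Y) : Y →ₗ[ℂ] Y)).ClosedComplemented

/-- Fredholm: closed range, finite-dimensional kernel, range of finite codimension. -/
def IsFredholmOp {Y : Type*} [NormedAddCommGroup Y] [NormedSpace ℂ Y]
    (S : Y →L[ℂ] Y) : Prop :=
  IsClosed ((LinearMap.range ((S : Y →L[ℂ] Y) : Y →ₗ[ℂ] Y) : Submodule ℂ Y) : Set Y) ∧
    FiniteDimensional ℂ (LinearMap.ker ((S : Y →L[ℂ] Y) : Y →ₗ[ℂ] Y)) ∧ FiniteDimensional ℂ (Y ⧸ LinearMap.range ((S : Y →L[ℂ] Y) : Y →ₗ[ℂ] Y))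

/-- Regular operator: kernel and range are complemented (closed) subspaces. -/
def IsRegularOp {Y : Type*} [NormedAddCommGroup Y] [NormedSpace ℂ Y]
    (S : Y →L[ℂ] Y) : Prop :=
  (LinearMap.ker ((S : Y →L[ℂ] Y) : Y →ₗ[ℂ] Y)).ClosedComplemented ∧ (LinearMap.range ((S : Y →L[ℂ] Y) : Y →ₗ[ℂ] Y)).ClosedComplemented

lemma range_pow_invariant {X : Type*} [NormedAddCommGroup X] [NormedSpace ℂ X]
    (T : X →L[ℂ] X) (n : ℕ) :
    ∀ x ∈ LinearMap.range ((T ^ n : X →L[ℂ] X) : X →ₗ[ℂ] X), T x ∈ LinearMap.range ((T ^ n : X →L[ℂ] X) : X →ₗ[ℂ] X) := by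
  rintro x ⟨y, rfl⟩
  exact ⟨T y, by
    simp only [ContinuousLinearMap.coe_coe]
    rw [← ContinuousLinearMap.mul_apply, ← ContinuousLinearMap.mul_apply, ← pow_succ,
      ← pow_succ']⟩

/-- B-Fredholm: for some `n`, `R(T^n)` is closed and the restriction of `T` to `R(T^n)`,
viewed as an operator from `R(T^n)` to `R(T^n)`, is a Fredholm operator. -/
def IsBFredholm {X : Type*} [NormedAddCommGroup X] [NormedSpace ℂ X]
    (T : X →L[ℂ] X) : Prop :=
  ∃ n : ℕ, IsClosed ((LinearMap.range ((T ^ n : X →L[ℂ] X) : X →ₗ[ℂ] X) : Submodule ℂ X) : Set X) ∧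
    IsFredholmOp (clmRestrict T (LinearMap.range ((T ^ n : X →L[ℂ] X) : X →ₗ[ℂ] X)) (range_pow_invariant T n))

/-- Left Drazin invertible element of a unital ring: there is an idempotent `p`
commuting with `a` such that `a * p` is nilpotent and `a + p` has a left inverse
commuting with `p`. -/
def IsLeftDrazinInvertible {A : Type*} [Ring A] (a : A) : Prop :=
  ∃ p : A, IsIdempotentElem p ∧ a * p = p * a ∧ IsNilpotent (a * p) ∧
    ∃ b : A, b * (a + p) = 1 ∧ b * p = p * b

/-- Right Drazin invertible element of a unital ring: there is an idempotent `p`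
commuting with `a` such that `a * p` is nilpotent and `a + p` has a right inverse
commuting with `p`. -/
def IsRightDrazinInvertible {A : Type*} [Ring A] (a : A) : Prop :=
  ∃ p : A, IsIdempotentElem p ∧ a * p = p * a ∧ IsNilpotent (a * p) ∧
    ∃ b : A, (a + p) * b = 1 ∧ b * p = p * b

/-- Drazin invertible element of a unital ring: there is an idempotent `p`
commuting with `a` such that `a * p` is nilpotent and `a + p` is invertible. -/
def IsDrazinInvertible {A : Type*} [Ring A] (a : A) : Prop :=
  ∃ p : A, IsIdempotentElem p ∧ a * p = p * a ∧ IsNilpotent (a * p) ∧ IsUnit (a + p)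

end

/-!
Let `S = T + F` and `m = max d d'`. Since `d' ∈ Δ(S)`, `N(S) ∩ R(S^{d'}) ⊆ N(S) ∩ R(S^m)`, so it
suffices to bound the latter. Finite-rank operators form a two-sided ideal, hence
`S^m - T^m` has finite rank and `R(S^m) ⊆ R(T^m) + K` with `K` finite-dimensional. Modulo the
finite-dimensional range of `F`, a vector of `N(S) ∩ R(S^m)` lies in `ker F`, hence in
`N(T) ∩ (R(T^m) + K)`, which is finite-dimensional because `N(T) ∩ R(T^m) ⊆ N(T) ∩ R(T^d)` is.
-/

theorem TwoSidedIdeal.add_pow_sub_pow_mem {R : Type*} [Ring R] (I : TwoSidedIdeal R) (a : R)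
    {f : R} (hf : f ∈ I) (n : ℕ) : (a + f) ^ n - a ^ n ∈ I := by
  induction n with
  | zero => simp [I.zero_mem]
  | succ n ih =>
    have hsplit : (a + f) ^ (n + 1) - a ^ (n + 1) =
        ((a + f) ^ n - a ^ n) * (a + f) + a ^ n * f := by
      rw [pow_succ, pow_succ]
      noncomm_ring
    rw [hsplit]
    exact I.add_mem (I.mul_mem_right _ _ ih) (I.mul_mem_left _ _ hf)

theorem Submodule.finite_of_finite_map_of_finite_inf_ker {R M N : Type*} [Ring R]
    [AddCommGroup M] [Module R M] [AddCommGroup N] [Module R N] (f : M →ₗ[R] N)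
    {s : Submodule R M} (hmap : Module.Finite R (s.map f))
    (hker : Module.Finite R (s ⊓ LinearMap.ker f : Submodule R M)) : Module.Finite R s :=
  Module.Finite.iff_fg.2 <|
    fg_of_fg_map_of_fg_inf_ker f (Module.Finite.iff_fg.1 hmap) (Module.Finite.iff_fg.1 hker)

theorem Submodule.finiteDimensional_inf_sup {K V : Type*} [DivisionRing K] [AddCommGroup V]
    [Module K V] (A P Q : Submodule K V) [FiniteDimensional K (A ⊓ P : Submodule K V)]
    [FiniteDimensional K Q] : FiniteDimensional K (A ⊓ (P ⊔ Q) : Submodule K V) := by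
  refine finite_of_finite_map_of_finite_inf_ker P.mkQ ?_ ?_
  · refine finiteDimensional_of_le (S₂ := Q.map P.mkQ) ?_
    rintro _ ⟨x, hx, rfl⟩
    obtain ⟨p, hp, q, hq, rfl⟩ := mem_sup.1 hx.2
    exact ⟨q, hq, by simp [(Quotient.mk_eq_zero P).2 hp]⟩
  · rw [ker_mkQ]
    exact finiteDimensional_of_le (S₂ := A ⊓ P) fun x hx => ⟨hx.1.1, hx.2⟩

namespace LinearMap

variable {R M N : Type*} [Ring R] [AddCommGroup M] [Module R M] [AddCommGroup N] [Module R N]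

theorem range_le_range_sup_range_sub (f g : M →ₗ[R] N) : range f ≤ range g ⊔ range (f - g) := by
  rintro _ ⟨x, rfl⟩
  exact Submodule.mem_sup.2 ⟨g x, mem_range_self g x, (f - g) x, mem_range_self _ x, by simp⟩

theorem ker_add_inf_ker_le (f g : M →ₗ[R] N) : ker (f + g) ⊓ ker g ≤ ker f := by
  rintro x ⟨hfg, hg⟩
  simpa [mem_ker.1 hg] using mem_ker.1 hfg

end LinearMap

namespace ContinuousLinearMap

variable {X : Type*} [NormedAddCommGroup X] [NormedSpace ℂ X]

theorem finiteDimensional_range_add_pow_sub_pow (T : X →L[ℂ] X) {F : X →L[ℂ] X}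
    (hF : FiniteDimensional ℂ (LinearMap.range (F : X →ₗ[ℂ] X))) (n : ℕ) :
    FiniteDimensional ℂ (LinearMap.range (((T + F) ^ n - T ^ n : X →L[ℂ] X) : X →ₗ[ℂ] X)) := by
  have hmem := (finiteRankIdeal X).add_pow_sub_pow_mem T
    (by rwa [finiteRankIdeal, TwoSidedIdeal.mem_mk']) n
  rwa [finiteRankIdeal, TwoSidedIdeal.mem_mk'] at hmem

theorem range_pow_le_range_pow_of_le (T : X →L[ℂ] X) {d m : ℕ} (hdm : d ≤ m) :
    LinearMap.range ((T ^ m : X →L[ℂ] X) : X →ₗ[ℂ] X) ≤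
      LinearMap.range ((T ^ d : X →L[ℂ] X) : X →ₗ[ℂ] X) := by
  rw [toLinearMap_pow, toLinearMap_pow]
  exact (LinearMap.iterateRange (T : X →ₗ[ℂ] X)).monotone hdm

theorem finiteDimensional_ker_add_inf_range_pow (T : X →L[ℂ] X) {F : X →L[ℂ] X}
    (hF : FiniteDimensional ℂ (LinearMap.range (F : X →ₗ[ℂ] X))) {d m : ℕ} (hdm : d ≤ m)
    (hfin : FiniteDimensional ℂ (LinearMap.ker (T : X →ₗ[ℂ] X) ⊓
      LinearMap.range ((T ^ d : X →L[ℂ] X) : X →ₗ[ℂ] X) : Submodule ℂ X)) :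
    FiniteDimensional ℂ (LinearMap.ker ((T + F : X →L[ℂ] X) : X →ₗ[ℂ] X) ⊓
      LinearMap.range (((T + F) ^ m : X →L[ℂ] X) : X →ₗ[ℂ] X) : Submodule ℂ X) := by
  set Rm := LinearMap.range ((T ^ m : X →L[ℂ] X) : X →ₗ[ℂ] X)
  set K := LinearMap.range (((T + F) ^ m - T ^ m : X →L[ℂ] X) : X →ₗ[ℂ] X)
  have := finiteDimensional_range_add_pow_sub_pow T hF m
  have : FiniteDimensional ℂ (LinearMap.ker (T : X →ₗ[ℂ] X) ⊓ Rm : Submodule ℂ X) :=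
    Submodule.finiteDimensional_of_le (inf_le_inf_left _ (range_pow_le_range_pow_of_le T hdm))
  have hrange : LinearMap.range (((T + F) ^ m : X →L[ℂ] X) : X →ₗ[ℂ] X) ≤ Rm ⊔ K := by
    simpa only [K, toLinearMap_sub] using LinearMap.range_le_range_sup_range_sub _ _
  have := Submodule.finiteDimensional_inf_sup (LinearMap.ker (T : X →ₗ[ℂ] X)) Rm K
  refine Submodule.finite_of_finite_map_of_finite_inf_ker (F : X →ₗ[ℂ] X) ?_ ?_
  · exact Submodule.finiteDimensional_of_le LinearMap.map_le_range
  · refine Submodule.finiteDimensional_of_le (S₂ := LinearMap.ker (T : X →ₗ[ℂ] X) ⊓ (Rm ⊔ K)) ?_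
    rintro x ⟨⟨hS, hSm⟩, hFx⟩
    rw [toLinearMap_add] at hS
    exact ⟨LinearMap.ker_add_inf_ker_le (T : X →ₗ[ℂ] X) F ⟨hS, hFx⟩, hrange hSm⟩

end ContinuousLinearMap

theorem finiteDim_kernel_inter_range_perturbation_general
    (X : Type*) [NormedAddCommGroup X] [NormedSpace ℂ X]
    (T F : X →L[ℂ] X) (d d' : ℕ)
    (hF : FiniteDimensional ℂ (LinearMap.range ((F : X →L[ℂ] X) : X →ₗ[ℂ] X)))
    (hTF : IsQuasiFredholmOfDegree (T + F) d')
    (hfin : FiniteDimensional ℂ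
      (LinearMap.ker ((T : X →L[ℂ] X) : X →ₗ[ℂ] X) ⊓ LinearMap.range ((T ^ d : X →L[ℂ] X) : X →ₗ[ℂ] X) : Submodule ℂ X)) :
    FiniteDimensional ℂ
      (LinearMap.ker ((T + F : X →L[ℂ] X) : X →ₗ[ℂ] X) ⊓ LinearMap.range (((T + F) ^ d' : X →L[ℂ] X) : X →ₗ[ℂ] X) : Submodule ℂ X) := by
  have := T.finiteDimensional_ker_add_inf_range_pow hF (le_max_left d d') hfin
  exact Submodule.finiteDimensional_of_le (hTF.1.1 _ (le_max_right d d'))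

/-- If `T` is quasi-Fredholm of degree `d`, `F` has finite rank and `T + F` is
quasi-Fredholm of degree `d'`, then finite-dimensionality of `N(T) ∩ R(T^d)` implies
finite-dimensionality of `N(T+F) ∩ R((T+F)^{d'})`. -/
theorem finiteDim_kernel_inter_range_perturbation
    (X : Type*) [NormedAddCommGroup X] [NormedSpace ℂ X] [CompleteSpace X]
    (T F : X →L[ℂ] X) (d d' : ℕ)
    (hT : IsQuasiFredholmOfDegree T d)
    (hF : FiniteDimensional ℂ (LinearMap.range ((F : X →L[ℂ] X) : X →ₗ[ℂ] X)))
    (hTF : IsQuasiFredholmOfDegree (T + F) d')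
    (hfin : FiniteDimensional ℂ
      (LinearMap.ker ((T : X →L[ℂ] X) : X →ₗ[ℂ] X) ⊓ LinearMap.range ((T ^ d : X →L[ℂ] X) : X →ₗ[ℂ] X) : Submodule ℂ X)) :
    FiniteDimensional ℂ
      (LinearMap.ker ((T + F : X →L[ℂ] X) : X →ₗ[ℂ] X) ⊓ LinearMap.range (((T + F) ^ d' : X →L[ℂ] X) : X →ₗ[ℂ] X) : Submodule ℂ X) :=
  finiteDim_kernel_inter_range_perturbation_general X T F d d' hF hTF hfin
end

section
/- Let X be a complex Banach space and let A ∈ L(X) be such that A² − A is a finite-rank operator (i.e., the image of A in C₀(X) = L(X)/F₀(X) is an idempotent). Then there exists an idempotent P ∈ L(X) (P² = P) such that P − A is a finite-rank operator, i.e., every idempotent element of C₀(X) lifts to an idempotent of L(X). -/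
/-!
The subspace `N = R(A² - A)` is finite-dimensional, hence the range of a bounded projection `Q`,
and it is `A`-invariant because `A` commutes with `A² - A`. Then `P = A - QA = (1 - Q)A` is
idempotent: `(1 - Q)AQ = 0` gives `P² = (1 - Q)A²`, and `(1 - Q)(A² - A) = 0` turns this into `P`.
Finally `P - A = -QA` has range in `N`.
-/

theorem isIdempotentElem_sub_mul_of_mul_mul_eq {R : Type*} [Ring R] {a q : R}
    (hq : q * a * q = a * q) (hfix : q * (a * a - a) = a * a - a) :
    IsIdempotentElem (a - q * a) := by
  have hqaqa : q * a * (q * a) = a * (q * a) := by rw [← mul_assoc, hq, mul_assoc]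
  calc (a - q * a) * (a - q * a) = a * a - q * (a * a) := by
        rw [sub_mul, mul_sub, mul_sub, hqaqa, ← mul_assoc, mul_assoc q]; abel
    _ = a - q * a := by rw [sub_eq_sub_iff_sub_eq_sub, ← mul_sub, hfix]

theorem LinearMap.range_mem_invtSubmodule_of_commute {R M : Type*} [Semiring R]
    [AddCommMonoid M] [Module R M] {f g : Module.End R M} (h : Commute f g) :
    LinearMap.range f ∈ Module.End.invtSubmodule g := by
  rw [Module.End.mem_invtSubmodule_iff_forall_mem_of_mem]
  rintro _ ⟨x, rfl⟩
  exact ⟨g x, LinearMap.congr_fun h.eq x⟩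

theorem ContinuousLinearMap.exists_isIdempotentElem_range_sub_le {R M : Type*} [Ring R]
    [TopologicalSpace M] [AddCommGroup M] [IsTopologicalAddGroup M] [Module R M]
    (A : M →L[R] M) (hA : (A * A - A).range.ClosedComplemented) :
    ∃ P : M →L[R] M, IsIdempotentElem P ∧ (P - A).range ≤ (A * A - A).range := by
  obtain ⟨C, hC⟩ := hA.exists_isTopCompl
  set Q := (A * A - A).range.projectionL C hC
  have hQ : IsIdempotentElem Q := Submodule.isIdempotentElem_projectionL hC
  have hQrange : Q.range = (A * A - A).range := Submodule.range_projectionL hC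
  have hfix : Q * (A * A - A) = A * A - A := by
    ext x
    exact Submodule.projectionL_apply_left hC ⟨_, x, rfl⟩
  have hcomm : Commute (A * A - A) A := ((Commute.refl A).mul_left (.refl A)).sub_left (.refl A)
  have hconj : Q * A * Q = A * Q :=
    IsIdempotentElem.conj_eq_of_range_mem_invtSubmodule hQ <| hQrange ▸
      LinearMap.range_mem_invtSubmodule_of_commute (hcomm.map toLinearMapRingHom)
  refine ⟨A - Q * A, isIdempotentElem_sub_mul_of_mul_mul_eq hconj hfix, ?_⟩
  rw [sub_sub_cancel_left, ← hQrange]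
  rintro _ ⟨x, rfl⟩
  exact ⟨-A x, by simp⟩

theorem idempotent_lifts_mod_finiteRank_general
    (X : Type*) [NormedAddCommGroup X] [NormedSpace ℂ X]
    (A : X →L[ℂ] X) (h : FiniteDimensional ℂ (LinearMap.range ((A * A - A : X →L[ℂ] X) : X →ₗ[ℂ] X))) :
    ∃ P : X →L[ℂ] X, P * P = P ∧ FiniteDimensional ℂ (LinearMap.range ((P - A : X →L[ℂ] X) : X →ₗ[ℂ] X)) := by
  obtain ⟨P, hP, hPA⟩ := A.exists_isIdempotentElem_range_sub_le (.of_finiteDimensional _)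
  exact ⟨P, hP, Submodule.finiteDimensional_of_le hPA⟩

/-- Every idempotent of `C₀(X) = L(X)/F₀(X)` lifts to an idempotent of
`L(X)`: if `A² - A` has finite rank then there is an idempotent `P ∈ L(X)` with `P - A`
of finite rank. -/
theorem idempotent_lifts_mod_finiteRank
    (X : Type*) [NormedAddCommGroup X] [NormedSpace ℂ X] [CompleteSpace X]
    (A : X →L[ℂ] X) (h : FiniteDimensional ℂ (LinearMap.range ((A * A - A : X →L[ℂ] X) : X →ₗ[ℂ] X))) :
    ∃ P : X →L[ℂ] X, P * P = P ∧ FiniteDimensional ℂ (LinearMap.range ((P - A : X →L[ℂ] X) : X →ₗ[ℂ] X)) :=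
  idempotent_lifts_mod_finiteRank_general X A h
end
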